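/- Let d, h ∈ ℕ with h ≥ 1, and u, v > 0. Let l(x) = log(1/x), (Tf)(x) = x f({1/x}), and J(d,h,u,v) = {x ∈ (0,1)\ℚ : (T^d l)(x) ≥ u and (T^{d+h} l)(x) ≥ v}. Then m(J(d,h,u,v)) ≤ 2 exp(−2^{(h−2)/2} v exp(2^{(d−2)/2} u)), where m is the Gauss measure. -/

import Mathlib

/-!
Write `q_k(x) = x α(x) ⋯ α^{k-1}(x)`, so that `(T^k l)(x) = q_k(x) l(α^k x)`. Two consecutive
factors satisfy `y α(y) ≤ 1/2`, hence `q_k ≤ 2^{-(k-1)/2}`. Thus `T^d l ≥ u` forces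
`α^d x ≤ exp(-2^{(d-2)/2} u)`; this is a factor of `q_{d+h}`, so `T^{d+h} l ≥ v` forces
`α^{d+h} x ≤ ε := exp(-2^{(h-2)/2} v exp(2^{(d-2)/2} u))`. The Gauss measure is invariant
under `α` (the inverse branches `y ↦ 1/(y+n)` carry the density to a telescoping series),
so `J` has measure at most `m(0, ε] ≤ ε / log 2 ≤ 2ε`.
-/

open MeasureTheory

/-- The Gauss map `α(x) = {1/x}`. -/
noncomputable def gaussMap (x : ℝ) : ℝ := Int.fract x⁻¹

/-- `l(x) = log(1/x)`. -/
noncomputable def lFn (x : ℝ) : ℝ := Real.log (1 / x)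

/-- The operator `(Tf)(x) = x f(α(x))`. -/
noncomputable def Tmap (f : ℝ → ℝ) : ℝ → ℝ := fun x => x * f (gaussMap x)

/-- `J(d,h,u,v) = {x ∈ (0,1)\ℚ : (T^d l)(x) ≥ u, (T^{d+h} l)(x) ≥ v}`. -/
def Jset (d h : ℕ) (u v : ℝ) : Set ℝ :=
  {x ∈ Set.Ioo (0:ℝ) 1 | Irrational x ∧ u ≤ Tmap^[d] lFn x ∧ v ≤ Tmap^[d + h] lFn x}

open Set

def unitIrrationals : Set ℝ := Ioo 0 1 ∩ {x | Irrational x}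

lemma gaussMap_mem_unitIrrationals {x : ℝ} (hx : x ∈ unitIrrationals) :
    gaussMap x ∈ unitIrrationals := by
  have hirr : Irrational (gaussMap x) := hx.2.inv.sub_intCast _
  refine ⟨⟨(Int.fract_nonneg _).lt_of_ne ?_, Int.fract_lt_one _⟩, hirr⟩
  intro h
  exact hirr.ne_rat 0 (by simpa [gaussMap] using h.symm)

lemma gaussMap_iterate_mem_unitIrrationals {x : ℝ} (hx : x ∈ unitIrrationals) (k : ℕ) :
    gaussMap^[k] x ∈ unitIrrationals := by
  induction k with
  | zero => exact hx
  | succ k ih => rw [Function.iterate_succ_apply']; exact gaussMap_mem_unitIrrationals ih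

lemma one_le_floor_inv {x : ℝ} (hx0 : 0 < x) (hx1 : x ≤ 1) : 1 ≤ ⌊x⁻¹⌋ :=
  Int.le_floor.2 (by simpa using (one_le_inv₀ hx0).2 hx1)

lemma mul_gaussMap_le_half {x : ℝ} (hx0 : 0 < x) (hx1 : x ≤ 1) : x * gaussMap x ≤ 1 / 2 := by
  have hn : (1 : ℝ) ≤ ⌊x⁻¹⌋ := by exact_mod_cast one_le_floor_inv hx0 hx1
  have hlt : x⁻¹ < ⌊x⁻¹⌋ + 1 := Int.lt_floor_add_one _
  have hxi : x * x⁻¹ = 1 := mul_inv_cancel₀ hx0.ne'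
  rw [gaussMap, Int.fract]
  nlinarith [mul_lt_mul_of_pos_left hlt hx0]

noncomputable def gaussProd (k : ℕ) (x : ℝ) : ℝ := ∏ i ∈ Finset.range k, gaussMap^[i] x

lemma gaussProd_succ (k : ℕ) (x : ℝ) : gaussProd (k + 1) x = gaussProd k x * gaussMap^[k] x :=
  Finset.prod_range_succ _ _

lemma gaussProd_succ' (k : ℕ) (x : ℝ) : gaussProd (k + 1) x = x * gaussProd k (gaussMap x) := by
  simp only [gaussProd, Finset.prod_range_succ', Function.iterate_succ_apply,
    Function.iterate_zero_apply, mul_comm]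

lemma gaussProd_add (a b : ℕ) (x : ℝ) :
    gaussProd (a + b) x = gaussProd a x * gaussProd b (gaussMap^[a] x) := by
  simp only [gaussProd, Finset.prod_range_add, ← Function.iterate_add_apply, add_comm]

lemma iterate_Tmap_apply (f : ℝ → ℝ) (k : ℕ) (x : ℝ) :
    Tmap^[k] f x = gaussProd k x * f (gaussMap^[k] x) := by
  induction k generalizing x with
  | zero => simp [gaussProd]
  | succ k ih =>
    rw [Function.iterate_succ_apply', Tmap, ih, gaussProd_succ', Function.iterate_succ_apply,
      mul_assoc]

lemma gaussProd_pos {x : ℝ} (hx : x ∈ unitIrrationals) (k : ℕ) : 0 < gaussProd k x :=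
  Finset.prod_pos fun i _ => (gaussMap_iterate_mem_unitIrrationals hx i).1.1

lemma gaussProd_le_one {x : ℝ} (hx : x ∈ unitIrrationals) (k : ℕ) : gaussProd k x ≤ 1 :=
  Finset.prod_le_one (fun i _ => (gaussMap_iterate_mem_unitIrrationals hx i).1.1.le)
    (fun i _ => (gaussMap_iterate_mem_unitIrrationals hx i).1.2.le)

lemma gaussProd_le_half_pow {x : ℝ} (hx : x ∈ unitIrrationals) (k : ℕ) :
    gaussProd k x ≤ (1 / 2) ^ (k / 2) := by
  induction k using Nat.twoStepInduction with
  | zero => simp [gaussProd]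
  | one => simpa [gaussProd] using hx.1.2.le
  | more k ih _ =>
    have hy := gaussMap_iterate_mem_unitIrrationals hx k
    have hpair : gaussMap^[k] x * gaussMap^[k + 1] x ≤ 1 / 2 := by
      rw [Function.iterate_succ_apply']
      exact mul_gaussMap_le_half hy.1.1 hy.1.2.le
    rw [gaussProd_succ, gaussProd_succ, mul_assoc, show (k + 2) / 2 = k / 2 + 1 by omega,
      pow_succ]
    exact mul_le_mul ih hpair
      (mul_nonneg hy.1.1.le (gaussMap_iterate_mem_unitIrrationals hx (k + 1)).1.1.le)
      (by positivity)

lemma gaussProd_le_two_rpow {x : ℝ} (hx : x ∈ unitIrrationals) (k : ℕ) :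
    gaussProd k x ≤ 2 ^ (-(((k : ℝ) - 1) / 2)) := by
  refine (gaussProd_le_half_pow hx k).trans ?_
  rw [one_div, inv_pow, ← Real.rpow_natCast, ← Real.rpow_neg zero_le_two]
  refine Real.rpow_le_rpow_of_exponent_le one_le_two ?_
  have : (k : ℝ) ≤ 2 * ((k / 2 : ℕ) : ℝ) + 1 := by
    exact_mod_cast (by omega : k ≤ 2 * (k / 2) + 1)
  linarith

lemma gaussMap_iterate_le_of_le_iterate_Tmap {x : ℝ} (hx : x ∈ unitIrrationals) {k : ℕ}
    {c w : ℝ} (hc : gaussProd k x ≤ c) (hw : w ≤ Tmap^[k] lFn x) :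
    gaussMap^[k] x ≤ Real.exp (-(c⁻¹ * w)) := by
  obtain ⟨⟨hy0, hy1⟩, -⟩ := gaussMap_iterate_mem_unitIrrationals hx k
  have hc0 : 0 < c := (gaussProd_pos hx k).trans_le hc
  have hl : 0 ≤ lFn (gaussMap^[k] x) := Real.log_nonneg (one_le_one_div hy0 hy1.le)
  rw [iterate_Tmap_apply] at hw
  have := (inv_mul_le_iff₀ hc0).2 (hw.trans (mul_le_mul_of_nonneg_right hc hl))
  rw [lFn, one_div, Real.log_inv] at this
  rw [← Real.log_le_iff_le_exp hy0]
  linarith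

lemma gaussMap_iterate_le_of_mem_Jset {d h : ℕ} (hh : 1 ≤ h) {u v x : ℝ}
    (hx : x ∈ Jset d h u v) :
    gaussMap^[d + h] x ≤ Real.exp (-((2:ℝ) ^ (((h:ℝ) - 2) / 2) * v *
      Real.exp ((2:ℝ) ^ (((d:ℝ) - 2) / 2) * u))) := by
  obtain ⟨hIoo, hirr, hu, hv⟩ := hx
  have hxI : x ∈ unitIrrationals := ⟨hIoo, hirr⟩
  set a := (2:ℝ) ^ (((d:ℝ) - 2) / 2) * u
  have hd : gaussMap^[d] x ≤ Real.exp (-a) := by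
    have hq : gaussProd d x ≤ 2 ^ (-(((d:ℝ) - 2) / 2)) :=
      (gaussProd_le_two_rpow hxI d).trans
        (Real.rpow_le_rpow_of_exponent_le one_le_two (by linarith))
    simpa only [Real.rpow_neg zero_le_two, inv_inv] using
      gaussMap_iterate_le_of_le_iterate_Tmap hxI hq hu
  have hdh : gaussProd (d + h) x ≤ Real.exp (-a) * 2 ^ (-(((h:ℝ) - 2) / 2)) := by
    obtain ⟨k, rfl⟩ : ∃ k, h = k + 1 := ⟨h - 1, by omega⟩
    have hy := gaussMap_iterate_mem_unitIrrationals hxI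
    rw [show d + (k + 1) = d + 1 + k by omega, gaussProd_add, gaussProd_succ]
    refine mul_le_mul ((mul_le_of_le_one_left (hy d).1.1.le (gaussProd_le_one hxI d)).trans hd)
      ?_ (gaussProd_pos (hy (d + 1)) k).le (Real.exp_pos _).le
    refine (gaussProd_le_two_rpow (hy (d + 1)) k).trans_eq ?_
    push_cast
    ring_nf
  convert gaussMap_iterate_le_of_le_iterate_Tmap hxI hdh hv using 3
  rw [mul_inv, Real.exp_neg, inv_inv, Real.rpow_neg zero_le_two, inv_inv]
  ring

lemma measurable_gaussMap : Measurable gaussMap := measurable_inv.fract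

lemma measurableSet_unitIrrationals : MeasurableSet unitIrrationals :=
  measurableSet_Ioo.inter (countable_range ((↑) : ℚ → ℝ)).measurableSet.compl

/-- `log 2` times the Gauss measure, as long as only subsets of `(0, 1)` are measured. -/
noncomputable def gaussWeight : Measure ℝ :=
  volume.withDensity fun x => ENNReal.ofReal (1 + x)⁻¹

lemma gaussWeight_image_inv_add {B : Set ℝ} (hB : MeasurableSet B) {c : ℝ}
    (hc : ∀ y ∈ B, 0 < y + c) :
    gaussWeight ((fun y => (y + c)⁻¹) '' B) =
      ∫⁻ y in B, ENNReal.ofReal ((y + c)⁻¹ - (y + c + 1)⁻¹) := by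
  have hder : ∀ y ∈ B, HasDerivWithinAt (fun y => (y + c)⁻¹) (-1 / (y + c) ^ 2) B y :=
    fun y hy => (((hasDerivAt_id y).add_const c).inv (hc y hy).ne').hasDerivWithinAt
  have hinj : InjOn (fun y => (y + c)⁻¹) B := fun a _ b _ hab => by simpa using hab
  rw [gaussWeight, withDensity_apply', lintegral_image_eq_lintegral_abs_det_fderiv_mul volume hB
    (fun y hy => (hder y hy).hasFDerivWithinAt) hinj]
  refine setLIntegral_congr_fun hB fun y hy => ?_
  have hyc := hc y hy
  simp only [ContinuousLinearMap.det_toSpanSingleton]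
  rw [← ENNReal.ofReal_mul (abs_nonneg _)]
  congr 1
  rw [abs_div, abs_neg, abs_one, abs_of_pos (by positivity)]
  field_simp
  ring

lemma hasSum_sub_succ_of_antitone {f : ℕ → ℝ} (hf : Antitone f)
    (hlim : Filter.Tendsto f Filter.atTop (nhds 0)) :
    HasSum (fun n => f n - f (n + 1)) (f 0) := by
  rw [hasSum_iff_tendsto_nat_of_nonneg fun n => sub_nonneg.2 (hf n.le_succ)]
  simp_rw [Finset.sum_range_sub']
  simpa using tendsto_const_nhds.sub hlim

lemma tsum_ofReal_inv_add_sub_inv_add {y : ℝ} (hy : 0 < y + 1) :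
    ∑' n : ℕ, ENNReal.ofReal ((y + (n + 1))⁻¹ - (y + (n + 1) + 1)⁻¹) =
      ENNReal.ofReal (1 + y)⁻¹ := by
  set f : ℕ → ℝ := fun n => (y + (n + 1))⁻¹
  have hf : Antitone f := fun m n hmn => by
    have hm : (0 : ℝ) ≤ m := m.cast_nonneg
    have hmn : (m : ℝ) ≤ n := by exact_mod_cast hmn
    exact inv_anti₀ (by linarith) (by linarith)
  have hlim : Filter.Tendsto f Filter.atTop (nhds 0) :=
    (Filter.tendsto_atTop_add_const_left _ _ (Filter.tendsto_atTop_add_const_right _ _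
      tendsto_natCast_atTop_atTop)).inv_tendsto_atTop
  have hsum := hasSum_sub_succ_of_antitone hf hlim
  have hterm (n : ℕ) : f n - f (n + 1) = (y + (n + 1))⁻¹ - (y + (n + 1) + 1)⁻¹ := by
    simp only [f]; push_cast; ring_nf
  simp only [hterm] at hsum
  rw [← ENNReal.ofReal_tsum_of_nonneg
    (fun n => by rw [← hterm]; exact sub_nonneg.2 (hf n.le_succ)) hsum.summable, hsum.tsum_eq]
  simp [f, add_comm]

lemma Ioo_inter_preimage_gaussMap_subset (B : Set ℝ) :
    Ioo 0 1 ∩ gaussMap ⁻¹' B ⊆ ⋃ n : ℕ, (fun y => (y + (n + 1))⁻¹) '' B := by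
  rintro x ⟨⟨hx0, hx1⟩, hxB⟩
  obtain ⟨n, hn⟩ := Int.eq_ofNat_of_zero_le (sub_nonneg.2 (one_le_floor_inv hx0 hx1.le))
  have hcast : (n : ℝ) + 1 = ⌊x⁻¹⌋ := by
    exact_mod_cast (by omega : (n : ℤ) + 1 = ⌊x⁻¹⌋)
  refine mem_iUnion.2 ⟨n, gaussMap x, hxB, ?_⟩
  simp only [hcast, gaussMap, Int.fract, sub_add_cancel, inv_inv]

lemma gaussWeight_preimage_gaussMap_le {B : Set ℝ} (hB : MeasurableSet B) (hB0 : B ⊆ Ici 0) :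
    gaussWeight (Ioo 0 1 ∩ gaussMap ⁻¹' B) ≤ gaussWeight B := calc
  _ ≤ gaussWeight (⋃ n : ℕ, (fun y => (y + (n + 1))⁻¹) '' B) :=
    measure_mono (Ioo_inter_preimage_gaussMap_subset B)
  _ ≤ ∑' n : ℕ, gaussWeight ((fun y => (y + (n + 1))⁻¹) '' B) := measure_iUnion_le _
  _ = ∑' n : ℕ, ∫⁻ y in B,
      ENNReal.ofReal ((y + (n + 1))⁻¹ - (y + (n + 1) + 1)⁻¹) := by
    congr with n
    exact gaussWeight_image_inv_add hB fun y hy => by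
      have : (0 : ℝ) ≤ y := hB0 hy
      positivity
  _ = ∫⁻ y in B, ∑' n : ℕ, ENNReal.ofReal ((y + (n + 1))⁻¹ - (y + (n + 1) + 1)⁻¹) :=
    (lintegral_tsum fun n => by fun_prop).symm
  _ = gaussWeight B := by
    rw [gaussWeight, withDensity_apply _ hB]
    refine setLIntegral_congr_fun hB fun y hy => tsum_ofReal_inv_add_sub_inv_add ?_
    have : (0 : ℝ) ≤ y := hB0 hy
    linarith

lemma gaussWeight_le_volume {s : Set ℝ} (hs : MeasurableSet s) (hs0 : s ⊆ Ici 0) :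
    gaussWeight s ≤ volume s := by
  rw [gaussWeight, withDensity_apply _ hs, ← setLIntegral_one]
  refine setLIntegral_mono measurable_const fun x hx => ENNReal.ofReal_le_one.2 ?_
  have : (0 : ℝ) ≤ x := hs0 hx
  exact inv_le_one_of_one_le₀ (by linarith)

lemma gaussWeight_iterate_preimage_Iic_le (k : ℕ) (t : ℝ) :
    gaussWeight (unitIrrationals ∩ gaussMap^[k] ⁻¹' Iic t) ≤ ENNReal.ofReal t := by
  induction k with
  | zero => calc
    _ ≤ gaussWeight (Ioc 0 t) := measure_mono fun x hx => ⟨hx.1.1.1, hx.2⟩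
    _ ≤ volume (Ioc 0 t) := gaussWeight_le_volume measurableSet_Ioc fun x hx => hx.1.le
    _ = ENNReal.ofReal t := by simp
  | succ k ih =>
    refine (measure_mono ?_).trans ((gaussWeight_preimage_gaussMap_le
      (measurableSet_unitIrrationals.inter (measurable_gaussMap.iterate k measurableSet_Iic))
      fun y hy => hy.1.1.1.le).trans ih)
    rintro x ⟨hx, hxt⟩
    exact ⟨hx.1, gaussMap_mem_unitIrrationals hx,
      by rwa [mem_preimage, ← Function.iterate_succ_apply]⟩

lemma setIntegral_inv_one_add_le {s t : Set ℝ} (hst : s ⊆ t) (ht : MeasurableSet t)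
    (ht0 : t ⊆ Ici 0) {b : ℝ} (hb : 0 ≤ b) (htb : gaussWeight t ≤ ENNReal.ofReal b) :
    ∫ x in s, (1 + x)⁻¹ ≤ b := by
  refine (Real.le_norm_self _).trans ((norm_integral_le_lintegral_norm _).trans
    (ENNReal.toReal_le_of_le_ofReal hb ?_))
  calc ∫⁻ x in s, ENNReal.ofReal ‖(1 + x)⁻¹‖
      ≤ ∫⁻ x in t, ENNReal.ofReal ‖(1 + x)⁻¹‖ := lintegral_mono_set hst
    _ = gaussWeight t := by
      rw [gaussWeight, withDensity_apply _ ht]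
      refine setLIntegral_congr_fun ht fun x hx => ?_
      have : (0 : ℝ) ≤ x := ht0 hx
      rw [Real.norm_of_nonneg (by positivity)]
    _ ≤ _ := htb

theorem gaussMeasure_Jset_bound_general (d h : ℕ) (hh : 1 ≤ h) (u v : ℝ) :
    (Real.log 2)⁻¹ * ∫ x in Jset d h u v, (1 + x)⁻¹ ≤
      2 * Real.exp (-((2:ℝ) ^ (((h:ℝ) - 2) / 2) * v *
        Real.exp ((2:ℝ) ^ (((d:ℝ) - 2) / 2) * u))) := by
  set ε := Real.exp (-((2:ℝ) ^ (((h:ℝ) - 2) / 2) * v *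
    Real.exp ((2:ℝ) ^ (((d:ℝ) - 2) / 2) * u)))
  have hJ : Jset d h u v ⊆ unitIrrationals ∩ gaussMap^[d + h] ⁻¹' Iic ε :=
    fun x hx => ⟨⟨hx.1, hx.2.1⟩, gaussMap_iterate_le_of_mem_Jset hh hx⟩
  have hint : ∫ x in Jset d h u v, (1 + x)⁻¹ ≤ ε :=
    setIntegral_inv_one_add_le hJ
      (measurableSet_unitIrrationals.inter (measurable_gaussMap.iterate _ measurableSet_Iic))
      (fun x hx => hx.1.1.1.le) (Real.exp_pos _).le (gaussWeight_iterate_preimage_Iic_le _ _)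
  have hlog : (Real.log 2)⁻¹ ≤ 2 :=
    inv_le_of_inv_le₀ two_pos (by linarith [Real.log_two_gt_d9])
  calc (Real.log 2)⁻¹ * ∫ x in Jset d h u v, (1 + x)⁻¹
      ≤ (Real.log 2)⁻¹ * ε :=
        mul_le_mul_of_nonneg_left hint (inv_nonneg.2 (Real.log_nonneg one_le_two))
    _ ≤ 2 * ε := mul_le_mul_of_nonneg_right hlog (Real.exp_pos _).le

/-- `m(J(d,h,u,v)) ≤ 2 exp(-2^{(h-2)/2} v exp(2^{(d-2)/2} u))`, `m` the Gauss measure. -/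
theorem gaussMeasure_Jset_bound (d h : ℕ) (hh : 1 ≤ h) (u v : ℝ)
    (hu : 0 < u) (hv : 0 < v) :
    (Real.log 2)⁻¹ * ∫ x in Jset d h u v, (1 + x)⁻¹ ≤
      2 * Real.exp (-((2:ℝ) ^ (((h:ℝ) - 2) / 2) * v *
        Real.exp ((2:ℝ) ^ (((d:ℝ) - 2) / 2) * u))) :=
  gaussMeasure_Jset_bound_general d h hh u v
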